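/- Let T = (V, E) be a finite tree with maximal degree at most D. Then there exists a finite set M with |M| = D and a weighting w : V → ℤ^M such that, defining w(e) = w(u) + w(v) for an edge e = {u,v}, each edge's weight vector attains its maximum coordinate at a unique index, and for each i ∈ M the set of edges whose maximum is attained at coordinate i forms a matching (every vertex is incident to at most one such edge). -/
import Mathlib



open SimpleGraph

namespace TreeSplitAux

variable {V : Type*} (G : SimpleGraph V)

lemma exists_parent (hconn : G.Connected) {r v : V} (hv : v ≠ r) :
    ∃ u, G.Adj u v ∧ G.dist r u + 1 = G.dist r v := by
  obtain ⟨p, hlen⟩ := (hconn v r).exists_walk_length_eq_dist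
  cases p with
  | nil => exact absurd rfl hv
  | @cons _ u _ h q =>
    refine ⟨u, h.symm, ?_⟩
    have h1 : G.dist r u ≤ q.length := by
      simpa [SimpleGraph.dist_comm] using SimpleGraph.dist_le q
    have h2 : G.dist r v ≤ G.dist r u + 1 := by
      have := hconn.dist_triangle (u := r) (v := u) (w := v)
      have hd1 : G.dist u v ≤ 1 := by
        simpa using SimpleGraph.dist_le (SimpleGraph.Walk.cons h.symm SimpleGraph.Walk.nil)
      omega
    have h3 : G.dist r v = q.length + 1 := by
      simpa [SimpleGraph.dist_comm] using hlen.symm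
    omega

open Classical in
noncomputable def par (hconn : G.Connected) (r : V) (v : V) : V :=
  if h : v = r then r else Classical.choose (exists_parent G hconn h)

lemma par_spec (hconn : G.Connected) {r v : V} (hv : v ≠ r) :
    G.Adj (par G hconn r v) v ∧ G.dist r (par G hconn r v) + 1 = G.dist r v := by
  rw [par, dif_neg hv]
  exact Classical.choose_spec (exists_parent G hconn hv)

lemma par_unique (hconn : G.Connected) (hacyc : G.IsAcyclic) {r v u : V} (hv : v ≠ r)
    (hadj : G.Adj u v) (hd : G.dist r u + 1 = G.dist r v) : u = par G hconn r v := by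
  classical
  obtain ⟨hadj', hd'⟩ := par_spec G hconn (r := r) hv
  set u' := par G hconn r v with hu'
  -- paths from u, u' to r
  obtain ⟨p, hp, hpl⟩ := (hconn u r).exists_path_of_dist
  obtain ⟨p', hp', hpl'⟩ := (hconn u' r).exists_path_of_dist
  have hdc : G.dist u r = G.dist r u := SimpleGraph.dist_comm ..
  have hdc' : G.dist u' r = G.dist r u' := SimpleGraph.dist_comm ..
  have hvp : v ∉ p.support := by
    intro hmem
    have := SimpleGraph.Walk.length_dropUntil_le p hmem
    have := SimpleGraph.dist_le (p.dropUntil v hmem)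
    have : G.dist r v ≤ G.dist r u := by
      rw [SimpleGraph.dist_comm]
      omega
    omega
  have hvp' : v ∉ p'.support := by
    intro hmem
    have := SimpleGraph.Walk.length_dropUntil_le p' hmem
    have := SimpleGraph.dist_le (p'.dropUntil v hmem)
    have : G.dist r v ≤ G.dist r u' := by
      rw [SimpleGraph.dist_comm]
      omega
    omega
  have hQ1 : (SimpleGraph.Walk.cons hadj.symm p).IsPath := hp.cons hvp
  have hQ2 : (SimpleGraph.Walk.cons hadj'.symm p').IsPath := hp'.cons hvp'
  have := SimpleGraph.isAcyclic_iff_path_unique.mp hacyc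
    ⟨SimpleGraph.Walk.cons hadj.symm p, hQ1⟩ ⟨SimpleGraph.Walk.cons hadj'.symm p', hQ2⟩
  have hw : (SimpleGraph.Walk.cons hadj.symm p) = (SimpleGraph.Walk.cons hadj'.symm p') :=
    congrArg Subtype.val this
  have h1 : (SimpleGraph.Walk.cons hadj.symm p).getVert 1 = u := by
    simp [SimpleGraph.Walk.getVert_cons_succ]
  have h2 : (SimpleGraph.Walk.cons hadj'.symm p').getVert 1 = u' := by
    simp [SimpleGraph.Walk.getVert_cons_succ]
  rw [← h1, hw, h2]

lemma adj_dist_ne (hconn : G.Connected) (hacyc : G.IsAcyclic) (r : V) {u v : V}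
    (hadj : G.Adj u v) : G.dist r u ≠ G.dist r v := by
  classical
  intro hEq
  obtain ⟨p, hp, hpl⟩ := (hconn r u).exists_path_of_dist
  obtain ⟨p', hp', hpl'⟩ := (hconn r v).exists_path_of_dist
  have hvp : v ∉ p.support := by
    intro hmem
    have hts := SimpleGraph.Walk.take_spec p hmem
    have hlen := congrArg SimpleGraph.Walk.length hts
    rw [SimpleGraph.Walk.length_append] at hlen
    have hdrop : (p.dropUntil v hmem).length ≠ 0 := by
      intro h0
      exact hadj.ne (SimpleGraph.Walk.eq_of_length_eq_zero h0).symm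
    have := SimpleGraph.dist_le (p.takeUntil v hmem)
    omega
  have hQ : (p.concat hadj).IsPath := by
    rw [← SimpleGraph.Walk.isPath_reverse_iff, SimpleGraph.Walk.reverse_concat]
    refine hp.reverse.cons ?_
    rw [SimpleGraph.Walk.support_reverse, List.mem_reverse]
    exact hvp
  have := SimpleGraph.isAcyclic_iff_path_unique.mp hacyc ⟨p.concat hadj, hQ⟩ ⟨p', hp'⟩
  have hw : p.concat hadj = p' := congrArg Subtype.val this
  have := congrArg SimpleGraph.Walk.length hw
  rw [SimpleGraph.Walk.length_concat] at this
  omega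

lemma adj_par (hconn : G.Connected) (hacyc : G.IsAcyclic) (r : V) {u v : V}
    (hadj : G.Adj u v) :
    (v ≠ r ∧ par G hconn r v = u) ∨ (u ≠ r ∧ par G hconn r u = v) := by
  have hne := adj_dist_ne G hconn hacyc r hadj
  have hle1 : G.dist r v ≤ G.dist r u + 1 := by
    have := hconn.dist_triangle (u := r) (v := u) (w := v)
    have : G.dist u v ≤ 1 := by
      simpa using SimpleGraph.dist_le (SimpleGraph.Walk.cons hadj SimpleGraph.Walk.nil)
    omega
  have hle2 : G.dist r u ≤ G.dist r v + 1 := by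
    have := hconn.dist_triangle (u := r) (v := v) (w := u)
    have : G.dist v u ≤ 1 := by
      simpa using SimpleGraph.dist_le (SimpleGraph.Walk.cons hadj.symm SimpleGraph.Walk.nil)
    omega
  rcases lt_or_gt_of_ne hne with hlt | hlt
  · left
    have hvr : v ≠ r := by
      intro h; subst h; simp [SimpleGraph.dist_self] at hlt
    exact ⟨hvr, (par_unique G hconn hacyc hvr hadj (by omega)).symm⟩
  · right
    have hur : u ≠ r := by
      intro h; subst h; simp [SimpleGraph.dist_self] at hlt
    exact ⟨hur, (par_unique G hconn hacyc hur hadj.symm (by omega)).symm⟩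

variable [Fintype V]

lemma exists_inj (hconn : G.Connected) (r : V) {D : ℕ}
    (hdeg : ∀ v : V, (G.neighborSet v).ncard ≤ D) (u : V) (x : Fin D) :
    ∃ f : {v : V // G.Adj u v ∧ v ≠ r ∧ par G hconn r v = u} → Fin D,
      Function.Injective f ∧ (u ≠ r → ∀ v, f v ≠ x) := by
  classical
  set S : Set V := {v | G.Adj u v ∧ v ≠ r ∧ par G hconn r v = u} with hS
  have hsub : S ⊆ G.neighborSet u := fun v hv => hv.1
  by_cases hur : u = r
  · have hcard : Fintype.card {v : V // G.Adj u v ∧ v ≠ r ∧ par G hconn r v = u} ≤ D := by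
      have h1 : S.ncard ≤ (G.neighborSet u).ncard := Set.ncard_le_ncard hsub (Set.toFinite _)
      have h2 : Fintype.card {v : V // G.Adj u v ∧ v ≠ r ∧ par G hconn r v = u}
          = Nat.card S := (Nat.card_eq_fintype_card).symm
      rw [h2, Nat.card_coe_set_eq]
      exact h1.trans (hdeg u)
    obtain ⟨f⟩ := Function.Embedding.nonempty_of_card_le (β := Fin D)
      (by simpa using hcard)
    exact ⟨f, f.injective, fun h => absurd hur h⟩
  · -- u ≠ r : par u is a neighbor not in S
    obtain ⟨hadj', hd'⟩ := par_spec G hconn (r := r) hur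
    have hpmem : par G hconn r u ∈ G.neighborSet u := hadj'.symm
    have hpnot : par G hconn r u ∉ S := by
      intro hmem
      obtain ⟨hadj2, hne2, hpar2⟩ := hmem
      have := (par_spec G hconn (r := r) hne2).2
      rw [hpar2] at this
      omega
    have hcard : S.ncard + 1 ≤ D := by
      have hins : (insert (par G hconn r u) S).ncard = S.ncard + 1 :=
        Set.ncard_insert_of_notMem hpnot (Set.toFinite _)
      have hsub2 : insert (par G hconn r u) S ⊆ G.neighborSet u := by
        intro w hw
        rcases hw with h | h
        · exact h ▸ hpmem
        · exact hsub h
      have := Set.ncard_le_ncard hsub2 (Set.toFinite _)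
      have := hdeg u
      omega
    have hcard2 : Fintype.card {v : V // G.Adj u v ∧ v ≠ r ∧ par G hconn r v = u}
        ≤ Fintype.card {i : Fin D // i ≠ x} := by
      have h2 : Fintype.card {v : V // G.Adj u v ∧ v ≠ r ∧ par G hconn r v = u}
          = Nat.card S := (Nat.card_eq_fintype_card).symm
      have h3 : Fintype.card {i : Fin D // i ≠ x} = D - 1 := by
        simp [Fintype.card_subtype_compl, Fintype.card_subtype_eq]
      rw [h2, Nat.card_coe_set_eq, h3]
      omega
    obtain ⟨f⟩ := Function.Embedding.nonempty_of_card_le hcard2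
    exact ⟨fun v => (f v).1, fun a b hab => f.injective (Subtype.ext hab),
      fun _ v => (f v).2⟩

open Classical in
noncomputable def col (hconn : G.Connected) (r : V) (D : ℕ) (hD : 0 < D)
    (hdeg : ∀ v : V, (G.neighborSet v).ncard ≤ D) : V → Fin D :=
  fun v =>
    if h : v = r then ⟨0, hD⟩
    else
      Classical.choose (exists_inj G hconn r hdeg (par G hconn r v)
          (col hconn r D hD hdeg (par G hconn r v)))
        ⟨v, (par_spec G hconn h).1, h, rfl⟩
termination_by v => G.dist r v
decreasing_by
  have := (par_spec G hconn h).2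
  omega

lemma col_eq (hconn : G.Connected) (r : V) (D : ℕ) (hD : 0 < D)
    (hdeg : ∀ v : V, (G.neighborSet v).ncard ≤ D) (u v : V)
    (h : G.Adj u v ∧ v ≠ r ∧ par G hconn r v = u) :
    col G hconn r D hD hdeg v =
      Classical.choose (exists_inj G hconn r hdeg u (col G hconn r D hD hdeg u)) ⟨v, h⟩ := by
  obtain ⟨hadj, hv, hpar⟩ := h
  subst hpar
  rw [col, dif_neg hv]

lemma col_ne (hconn : G.Connected) (r : V) (D : ℕ) (hD : 0 < D)
    (hdeg : ∀ v : V, (G.neighborSet v).ncard ≤ D) {v : V} (hv : v ≠ r)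
    (hpr : par G hconn r v ≠ r) :
    col G hconn r D hD hdeg v ≠ col G hconn r D hD hdeg (par G hconn r v) := by
  rw [col_eq G hconn r D hD hdeg (par G hconn r v) v ⟨(par_spec G hconn hv).1, hv, rfl⟩]
  exact (Classical.choose_spec (exists_inj G hconn r hdeg (par G hconn r v)
    (col G hconn r D hD hdeg (par G hconn r v)))).2 hpr _

lemma col_inj (hconn : G.Connected) (r : V) (D : ℕ) (hD : 0 < D)
    (hdeg : ∀ v : V, (G.neighborSet v).ncard ≤ D) {v₁ v₂ u : V} (h₁ : v₁ ≠ r) (h₂ : v₂ ≠ r)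
    (ha₁ : G.Adj u v₁) (ha₂ : G.Adj u v₂)
    (hp₁ : par G hconn r v₁ = u) (hp₂ : par G hconn r v₂ = u)
    (hc : col G hconn r D hD hdeg v₁ = col G hconn r D hD hdeg v₂) : v₁ = v₂ := by
  rw [col_eq G hconn r D hD hdeg u v₁ ⟨ha₁, h₁, hp₁⟩,
    col_eq G hconn r D hD hdeg u v₂ ⟨ha₂, h₂, hp₂⟩] at hc
  have := (Classical.choose_spec (exists_inj G hconn r hdeg u
    (col G hconn r D hD hdeg u))).1 hc
  exact congrArg Subtype.val this

open Classical in
noncomputable def wt (hconn : G.Connected) (r : V) (D : ℕ) (hD : 0 < D)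
    (hdeg : ∀ v : V, (G.neighborSet v).ncard ≤ D) (v : V) (i : Fin D) : ℤ :=
  if v ≠ r ∧ i = col G hconn r D hD hdeg v then 2 ^ (G.dist r v) else 0

variable (hconn : G.Connected) (r : V) (D : ℕ) (hD : 0 < D)
    (hdeg : ∀ v : V, (G.neighborSet v).ncard ≤ D)

lemma wt_le (v : V) (i : Fin D) : wt G hconn r D hD hdeg v i ≤ 2 ^ (G.dist r v) := by
  rw [wt]; split_ifs
  · exact le_refl _
  · positivity

lemma wt_nonneg (v : V) (i : Fin D) : 0 ≤ wt G hconn r D hD hdeg v i := by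
  rw [wt]; split_ifs
  · positivity
  · exact le_refl _

lemma wt_col {v : V} (hv : v ≠ r) :
    wt G hconn r D hD hdeg v (col G hconn r D hD hdeg v) = 2 ^ (G.dist r v) := by
  rw [wt, if_pos ⟨hv, rfl⟩]

lemma wt_ne {v : V} {i : Fin D} (hi : i ≠ col G hconn r D hD hdeg v) :
    wt G hconn r D hD hdeg v i = 0 := by
  rw [wt, if_neg]; tauto

lemma wt_par_col {v : V} (hv : v ≠ r) :
    wt G hconn r D hD hdeg (par G hconn r v) (col G hconn r D hD hdeg v) = 0 := by
  rw [wt, if_neg]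
  rintro ⟨hur, hc⟩
  exact col_ne G hconn r D hD hdeg hv hur hc

omit [Fintype V] in
lemma pow_dist_lt {v : V} (hv : v ≠ r) :
    (2 : ℤ) ^ (G.dist r (par G hconn r v)) < 2 ^ (G.dist r v) := by
  have := (par_spec G hconn hv).2
  exact pow_lt_pow_right₀ (by norm_num) (by omega)

lemma edge_max {v : V} (hv : v ≠ r) (j : Fin D) :
    wt G hconn r D hD hdeg (par G hconn r v) j + wt G hconn r D hD hdeg v j ≤
      wt G hconn r D hD hdeg (par G hconn r v) (col G hconn r D hD hdeg v) +
        wt G hconn r D hD hdeg v (col G hconn r D hD hdeg v) := by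
  by_cases hj : j = col G hconn r D hD hdeg v
  · subst hj; exact le_refl _
  · rw [wt_ne G hconn r D hD hdeg hj, wt_par_col G hconn r D hD hdeg hv,
      wt_col G hconn r D hD hdeg hv]
    have h2 := wt_le G hconn r D hD hdeg (par G hconn r v) j
    have h3 := pow_dist_lt G hconn r hv
    linarith

lemma edge_max_only {v : V} (hv : v ≠ r) (i : Fin D)
    (hi : ∀ j, wt G hconn r D hD hdeg (par G hconn r v) j + wt G hconn r D hD hdeg v j ≤
      wt G hconn r D hD hdeg (par G hconn r v) i + wt G hconn r D hD hdeg v i) :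
    i = col G hconn r D hD hdeg v := by
  by_contra hne
  have h1 := hi (col G hconn r D hD hdeg v)
  rw [wt_par_col G hconn r D hD hdeg hv, wt_col G hconn r D hD hdeg hv,
    wt_ne G hconn r D hD hdeg hne] at h1
  have h2 := wt_le G hconn r D hD hdeg (par G hconn r v) i
  have h3 := pow_dist_lt G hconn r hv
  linarith

end TreeSplitAux


/-- For a finite tree with maximal degree at most `D`, there is a finite index set `M`
of cardinality `D` and a weighting `w : V → ℤ^M` such that for every edge `{u,v}` the
vector `w u + w v` attains its maximum at a unique coordinate, and for each coordinate
`i` the edges whose maximum is attained at `i` form a matching. -/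
theorem tree_weighting_matching_splitting {V : Type*} [Fintype V] (G : SimpleGraph V)
    (hconn : G.Connected) (hacyc : G.IsAcyclic) (D : ℕ)
    (hdeg : ∀ v : V, (G.neighborSet v).ncard ≤ D) :
    ∃ (M : Type) (_ : Fintype M), Nat.card M = D ∧
      ∃ w : V → M → ℤ,
        (∀ u v : V, G.Adj u v →
          ∃! i : M, ∀ j : M, w u j + w v j ≤ w u i + w v i) ∧
        (∀ (i : M) (v u₁ u₂ : V), G.Adj v u₁ → G.Adj v u₂ →
          (∀ j : M, w v j + w u₁ j ≤ w v i + w u₁ i) →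
          (∀ j : M, w v j + w u₂ j ≤ w v i + w u₂ i) → u₁ = u₂) := by
  classical
  by_cases hD : 0 < D
  · have : Nonempty V := hconn.nonempty
    let r := Classical.arbitrary V
    let w := TreeSplitAux.wt G hconn r D hD hdeg
    let c := TreeSplitAux.col G hconn r D hD hdeg
    let p := TreeSplitAux.par G hconn r
    -- key: identify the maximizing index of an edge
    have key : ∀ (i : Fin D) (v u : V), G.Adj v u →
        (∀ j, w v j + w u j ≤ w v i + w u i) →
        (u ≠ r ∧ p u = v ∧ i = c u) ∨ (v ≠ r ∧ p v = u ∧ i = c v) := by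
      intro i v u hadj hm
      rcases TreeSplitAux.adj_par G hconn hacyc r hadj with ⟨hur, hpu⟩ | ⟨hvr, hpv⟩
      · left
        refine ⟨hur, hpu, ?_⟩
        apply TreeSplitAux.edge_max_only G hconn r D hD hdeg hur i
        intro j
        rw [hpu]
        exact hm j
      · right
        refine ⟨hvr, hpv, ?_⟩
        apply TreeSplitAux.edge_max_only G hconn r D hD hdeg hvr i
        intro j
        rw [hpv]
        have := hm j
        linarith
    refine ⟨Fin D, inferInstance, by simp, w, ?_, ?_⟩
    · intro u v hadj
      rcases TreeSplitAux.adj_par G hconn hacyc r hadj with ⟨hvr, hpu⟩ | ⟨hur, hpv⟩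
      · refine ⟨c v, ?_, ?_⟩
        · intro j
          have := TreeSplitAux.edge_max G hconn r D hD hdeg hvr j
          rwa [hpu] at this
        · intro i hi
          apply TreeSplitAux.edge_max_only G hconn r D hD hdeg hvr i
          intro j
          rw [hpu]
          exact hi j
      · refine ⟨c u, ?_, ?_⟩
        · intro j
          have := TreeSplitAux.edge_max G hconn r D hD hdeg hur j
          rw [hpv] at this
          linarith
        · intro i hi
          apply TreeSplitAux.edge_max_only G hconn r D hD hdeg hur i
          intro j
          rw [hpv]
          have := hi j
          linarith
    · intro i v u₁ u₂ h1 h2 hm1 hm2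
      rcases key i v u₁ h1 hm1 with ⟨h1r, hp1, hi1⟩ | ⟨hvr, hpv1, hiv1⟩
      · rcases key i v u₂ h2 hm2 with ⟨h2r, hp2, hi2⟩ | ⟨hvr, hpv2, hiv2⟩
        · exact TreeSplitAux.col_inj G hconn r D hD hdeg h1r h2r h1 h2 hp1 hp2
            (hi1.symm.trans hi2)
        · exfalso
          have hpr1 : TreeSplitAux.par G hconn r u₁ ≠ r := by
            rw [show TreeSplitAux.par G hconn r u₁ = v from hp1]; exact hvr
          have hne := TreeSplitAux.col_ne G hconn r D hD hdeg h1r hpr1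
          apply hne
          rw [show TreeSplitAux.par G hconn r u₁ = v from hp1]
          exact hi1.symm.trans hiv2
      · rcases key i v u₂ h2 hm2 with ⟨h2r, hp2, hi2⟩ | ⟨hvr2, hpv2, hiv2⟩
        · exfalso
          have hpr2 : TreeSplitAux.par G hconn r u₂ ≠ r := by
            rw [show TreeSplitAux.par G hconn r u₂ = v from hp2]; exact hvr
          have hne := TreeSplitAux.col_ne G hconn r D hD hdeg h2r hpr2
          apply hne
          rw [show TreeSplitAux.par G hconn r u₂ = v from hp2]
          exact hi2.symm.trans hiv1
        · rw [← hpv1, hpv2]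
  · have hnoadj : ∀ u v : V, ¬ G.Adj u v := by
      intro u v h
      have h1 : (G.neighborSet u).ncard ≤ D := hdeg u
      have h2 : 0 < (G.neighborSet u).ncard :=
        (Set.ncard_pos (Set.toFinite _)).mpr ⟨v, h⟩
      omega
    exact ⟨Fin D, inferInstance, by simp, 0,
      fun u v h => absurd h (hnoadj u v),
      fun i v u₁ u₂ h _ _ _ => absurd h (hnoadj v u₁)⟩
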